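/- arXiv:1301.4315 — 2 statements merged into one kernel-verified Lean document; each statement's English description precedes it below -/
import Mathlib

section
/- For every integer n ≥ 1, the function g_n : (0,1) → ℝ defined by g_n(p) = (1 − (1−p)^n)/(p(1−p)^n) is convex on the open interval (0,1). -/
/-! Writing `q = 1 - p`, the geometric sum `∑_{k=1}^n q⁻ᵏ` equals `(1 - qⁿ) / ((1 - q) qⁿ) = g_n(p)`,
and each `(1 - p)⁻ᵏ` is convex on `p < 1`, being `x ↦ x⁻ᵏ` (convex on `x > 0`) composed with an
affine map. -/

open Set

theorem ConvexOn.sum {𝕜 E β ι : Type*} [Semiring 𝕜] [PartialOrder 𝕜] [AddCommMonoid E]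
    [AddCommMonoid β] [PartialOrder β] [IsOrderedAddMonoid β] [SMul 𝕜 E] [Module 𝕜 β]
    [PosSMulMono 𝕜 β] {s : Set E} (hs : Convex 𝕜 s) (t : Finset ι) {f : ι → E → β}
    (hf : ∀ i ∈ t, ConvexOn 𝕜 s (f i)) : ConvexOn 𝕜 s fun x => ∑ i ∈ t, f i x := by
  have h := Finset.sum_induction f (ConvexOn 𝕜 s) (fun _ _ => ConvexOn.add) (convexOn_const 0 hs) hf
  rwa [Finset.sum_fn] at h

section Field

variable {𝕜 : Type*} [Field 𝕜]

theorem geom_sum_inv_pow_succ {q : 𝕜} (hq₀ : q ≠ 0) (hq₁ : 1 - q ≠ 0) (n : ℕ) :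
    ∑ k ∈ Finset.range n, q⁻¹ ^ (k + 1) = (1 - q ^ n) / ((1 - q) * q ^ n) := by
  induction n with
  | zero => simp
  | succ n ih =>
    rw [Finset.sum_range_succ, ih, inv_pow]
    field_simp
    ring

variable [LinearOrder 𝕜] [IsStrictOrderedRing 𝕜]

theorem convexOn_one_sub_inv_pow (m : ℕ) : ConvexOn 𝕜 (Iio 1) fun x : 𝕜 => (1 - x)⁻¹ ^ m := by
  let L : 𝕜 →ᵃ[𝕜] 𝕜 := AffineMap.lineMap 1 0
  have hL : ∀ x, L x = 1 - x := fun x => by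
    rw [AffineMap.lineMap_apply_ring']
    ring
  have h := (convexOn_zpow (-m : ℤ)).comp_affineMap L
  have hpre : L ⁻¹' Ioi 0 = Iio 1 := by
    ext x
    simp [hL]
  rw [hpre] at h
  refine h.congr fun x _ => ?_
  simp [hL]

end Field

theorem csma_collision_convex_general (n : ℕ) :
    ConvexOn ℝ (Set.Ioo (0 : ℝ) 1)
      (fun p : ℝ => (1 - (1 - p) ^ n) / (p * (1 - p) ^ n)) := by
  have hsum : ConvexOn ℝ (Iio 1) fun p : ℝ => ∑ k ∈ Finset.range n, (1 - p)⁻¹ ^ (k + 1) :=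
    ConvexOn.sum (convex_Iio 1) _ fun k _ => convexOn_one_sub_inv_pow (k + 1)
  refine (hsum.subset Ioo_subset_Iio_self (convex_Ioo 0 1)).congr fun p ⟨hp₀, hp₁⟩ => ?_
  dsimp only
  rw [geom_sum_inv_pow_succ (by linarith) (by linarith), sub_sub_cancel]

/-- For every integer `n ≥ 1`, the function `g_n(p) = (1 − (1−p)^n)/(p(1−p)^n)`
is convex on the open interval `(0,1)`. -/
theorem csma_collision_convex (n : ℕ) (hn : 1 ≤ n) :
    ConvexOn ℝ (Set.Ioo (0 : ℝ) 1)
      (fun p : ℝ => (1 - (1 - p) ^ n) / (p * (1 - p) ^ n)) :=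
  csma_collision_convex_general n
end

section
/- Fix an integer L ≥ 2 and positive real constants δ_idle, δ_coll, δ_succ. Then the function f_L(p) = δ_idle/(L p) + (1/(L p (1−p)^{L−1}) − 1/(L p) − 1)·δ_coll + δ_succ attains a minimum on the open interval (0,1), and the minimizer p_opt ∈ (0,1) is unique. -/
/-!
By the geometric sum formula, on `(0, 1)`
`f_L(p) = (δ_idle / L) p⁻¹ + (δ_coll / L) ∑_{k=1}^{L-1} (1 - p)⁻ᵏ + (δ_succ - δ_coll)`.
This is strictly convex, and it tends to `+∞` at `0` (first term) and at `1` (the `k = 1` term,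
which exists because `L ≥ 2`). So it attains its infimum inside `(0, 1)`, and a strictly convex
function has at most one minimizer.
-/

open Set Filter Topology
open Finset (range sum_range_succ)

theorem ContinuousOn.exists_isMinOn_Ioo {α β : Type*} [LinearOrder α] [TopologicalSpace α]
    [OrderTopology α] [DenselyOrdered α] [CompactIccSpace α] [LinearOrder β]
    [TopologicalSpace β] [ClosedIicTopology β] {f : α → β} {a b : α} (hab : a < b)
    (hf : ContinuousOn f (Ioo a b)) (ha : Tendsto f (𝓝[>] a) atTop)
    (hb : Tendsto f (𝓝[<] b) atTop) : ∃ x ∈ Ioo a b, IsMinOn f (Ioo a b) x := by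
  obtain ⟨c, hac, hcb⟩ := exists_between hab
  obtain ⟨u, ⟨hau, huc⟩, hu⟩ :=
    (mem_nhdsGT_iff_exists_mem_Ioc_Ioo_subset hac).1 (ha.eventually_ge_atTop (f c))
  obtain ⟨v, ⟨hcv, hvb⟩, hv⟩ :=
    (mem_nhdsLT_iff_exists_mem_Ico_Ioo_subset hcb).1 (hb.eventually_ge_atTop (f c))
  have hK : Icc u v ⊆ Ioo a b := Icc_subset_Ioo hau hvb
  obtain ⟨x, hxK, hx⟩ :=
    isCompact_Icc.exists_isMinOn ⟨c, huc, hcv⟩ (hf.mono hK)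
  refine ⟨x, hK hxK, fun y hy => ?_⟩
  by_cases hyK : y ∈ Icc u v
  · exact hx hyK
  · have hcy : f c ≤ f y := by
      rcases not_and_or.1 hyK with hy' | hy'
      · exact hu ⟨hy.1, lt_of_not_ge hy'⟩
      · exact hv ⟨lt_of_not_ge hy', hy.2⟩
    exact (hx ⟨huc, hcv⟩).trans hcy

theorem StrictConvexOn.existsUnique_isMinOn_Ioo {f : ℝ → ℝ} {a b : ℝ} (hab : a < b)
    (hf : StrictConvexOn ℝ (Ioo a b) f) (ha : Tendsto f (𝓝[>] a) atTop)
    (hb : Tendsto f (𝓝[<] b) atTop) :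
    ∃ x ∈ Ioo a b, IsMinOn f (Ioo a b) x ∧ ∀ y ∈ Ioo a b, IsMinOn f (Ioo a b) y → y = x := by
  obtain ⟨x, hx, hmin⟩ := (hf.convexOn.continuousOn isOpen_Ioo).exists_isMinOn_Ioo hab ha hb
  exact ⟨x, hx, hmin, fun y hy hy_min => hf.eq_of_isMinOn hy_min hmin hy hx⟩

theorem StrictConvexOn.const_mul {𝕜 E : Type*} [Field 𝕜] [LinearOrder 𝕜] [IsStrictOrderedRing 𝕜]
    [AddCommMonoid E] [Module 𝕜 E] {s : Set E} {f : E → 𝕜} (hf : StrictConvexOn 𝕜 s f)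
    {c : 𝕜} (hc : 0 < c) : StrictConvexOn 𝕜 s fun x => c * f x := by
  refine ⟨hf.1, fun x hx y hy hxy a b ha hb hab => ?_⟩
  calc c * f (a • x + b • y) < c * (a • f x + b • f y) :=
        mul_lt_mul_of_pos_left (hf.2 hx hy hxy ha hb hab) hc
    _ = a • (c * f x) + b • (c * f y) := by simp only [smul_eq_mul]; ring

theorem sum_range_inv_one_sub_pow_succ {p : ℝ} (hp₀ : p ≠ 0) (hp₁ : p ≠ 1) (m : ℕ) :
    ∑ k ∈ range m, (1 - p)⁻¹ ^ (k + 1) = 1 / (p * (1 - p) ^ m) - 1 / p := by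
  have : 1 - p ≠ 0 := sub_ne_zero.2 hp₁.symm
  induction m with
  | zero => simp
  | succ m ih =>
    rw [sum_range_succ, ih, inv_pow]
    field_simp
    ring

theorem convexOn_inv_one_sub_pow (n : ℕ) : ConvexOn ℝ (Iio 1) fun p : ℝ => (1 - p)⁻¹ ^ n := by
  have h : ConvexOn ℝ (Iio 1) fun p : ℝ => (1 - p)⁻¹ := by
    let reflect : ℝ →ᵃ[ℝ] ℝ := AffineMap.lineMap 1 0
    have hzpow := (convexOn_zpow (𝕜 := ℝ) (-1)).comp_affineMap reflect
    have hset : reflect ⁻¹' Ioi 0 = Iio 1 := by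
      ext p; simp [reflect, AffineMap.lineMap_apply]
    rw [hset] at hzpow
    exact hzpow.congr fun p _ => by simp [reflect, AffineMap.lineMap_apply, neg_add_eq_sub]
  exact h.pow (fun p hp => inv_nonneg.2 (sub_nonneg.2 (le_of_lt hp))) n

theorem convexOn_sum_range_inv_one_sub_pow_succ (m : ℕ) :
    ConvexOn ℝ (Iio 1) fun p : ℝ => ∑ k ∈ range m, (1 - p)⁻¹ ^ (k + 1) := by
  have := Finset.sum_induction (s := range m) (fun k p => (1 - p)⁻¹ ^ (k + 1))
    (ConvexOn ℝ (Iio 1)) (fun _ _ hf hg => hf.add hg) (convexOn_const 0 (convex_Iio 1))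
    (fun k _ => convexOn_inv_one_sub_pow (k + 1))
  simpa only [Finset.sum_fn] using this

theorem tendsto_inv_one_sub_nhdsLT_one : Tendsto (fun p : ℝ => (1 - p)⁻¹) (𝓝[<] 1) atTop := by
  refine tendsto_inv_nhdsGT_zero.comp (tendsto_nhdsWithin_iff.2 ⟨?_, ?_⟩)
  · simpa using ((continuous_sub_left (1:ℝ)).tendsto 1).mono_left nhdsWithin_le_nhds
  · filter_upwards [self_mem_nhdsWithin] with p hp using sub_pos.2 (mem_Iio.1 hp)

section InvAddSum

variable {a b : ℝ} (c : ℝ) (m : ℕ)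

theorem strictConvexOn_inv_add_sum (ha : 0 < a) (hb : 0 ≤ b) :
    StrictConvexOn ℝ (Ioo 0 1)
      fun p : ℝ => a * p⁻¹ + b * ∑ k ∈ range m, (1 - p)⁻¹ ^ (k + 1) + c := by
  have hinv : StrictConvexOn ℝ (Ioo 0 1) fun p : ℝ => a * p⁻¹ := by
    have := (strictConvexOn_zpow (m := -1) (by norm_num) (by norm_num)).subset
      Ioo_subset_Ioi_self (convex_Ioo 0 1)
    simpa using this.const_mul ha
  have hsum := ((convexOn_sum_range_inv_one_sub_pow_succ m).subset Ioo_subset_Iio_self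
    (convex_Ioo 0 1)).smul hb
  exact (hinv.add_convexOn hsum).add_const c

theorem tendsto_inv_add_sum_nhdsGT_zero (ha : 0 < a) (hb : 0 ≤ b) :
    Tendsto (fun p : ℝ => a * p⁻¹ + b * ∑ k ∈ range m, (1 - p)⁻¹ ^ (k + 1) + c)
      (𝓝[>] 0) atTop := by
  refine tendsto_atTop_mono' _ ?_
    (tendsto_atTop_add_const_right _ c (tendsto_inv_nhdsGT_zero.const_mul_atTop ha))
  filter_upwards [Ioo_mem_nhdsGT one_pos] with p hp
  have : 0 ≤ ∑ k ∈ range m, (1 - p)⁻¹ ^ (k + 1) :=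
    Finset.sum_nonneg fun k _ => pow_nonneg (inv_nonneg.2 (sub_nonneg.2 hp.2.le)) _
  linarith [mul_nonneg hb this]

theorem tendsto_inv_add_sum_nhdsLT_one (ha : 0 ≤ a) (hb : 0 < b) (hm : m ≠ 0) :
    Tendsto (fun p : ℝ => a * p⁻¹ + b * ∑ k ∈ range m, (1 - p)⁻¹ ^ (k + 1) + c)
      (𝓝[<] 1) atTop := by
  refine tendsto_atTop_mono' _ ?_
    (tendsto_atTop_add_const_right _ c (tendsto_inv_one_sub_nhdsLT_one.const_mul_atTop hb))
  filter_upwards [Ioo_mem_nhdsLT one_pos] with p hp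
  have hfirst : (1 - p)⁻¹ ≤ ∑ k ∈ range m, (1 - p)⁻¹ ^ (k + 1) := by
    have hp' : 0 < 1 - p := sub_pos.2 hp.2
    calc (1 - p)⁻¹ = (1 - p)⁻¹ ^ (0 + 1) := (pow_one _).symm
      _ ≤ _ := Finset.single_le_sum (f := fun k => (1 - p)⁻¹ ^ (k + 1))
        (fun k _ => by positivity) (Finset.mem_range.2 (Nat.pos_of_ne_zero hm))
  linarith [mul_nonneg ha (inv_nonneg.2 hp.1.le), mul_le_mul_of_nonneg_left hfirst hb.le]

end InvAddSum

theorem fL_exists_unique_minimizer_general (L : ℕ) (hL : 2 ≤ L)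
    (δidle δcoll δsucc : ℝ) (hidle : 0 < δidle) (hcoll : 0 < δcoll) :
    ∃ popt ∈ Set.Ioo (0 : ℝ) 1,
      (∀ q ∈ Set.Ioo (0 : ℝ) 1,
          δidle / (L * popt)
            + (1 / (L * popt * (1 - popt) ^ (L - 1)) - 1 / (L * popt) - 1) * δcoll + δsucc
          ≤ δidle / (L * q)
            + (1 / (L * q * (1 - q) ^ (L - 1)) - 1 / (L * q) - 1) * δcoll + δsucc) ∧
      ∀ p' ∈ Set.Ioo (0 : ℝ) 1,
        (∀ q ∈ Set.Ioo (0 : ℝ) 1,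
            δidle / (L * p')
              + (1 / (L * p' * (1 - p') ^ (L - 1)) - 1 / (L * p') - 1) * δcoll + δsucc
            ≤ δidle / (L * q)
              + (1 / (L * q * (1 - q) ^ (L - 1)) - 1 / (L * q) - 1) * δcoll + δsucc) →
        p' = popt := by
  have hL₀ : (0 : ℝ) < L := Nat.cast_pos.2 (by omega)
  have hf : ∀ p ∈ Ioo (0 : ℝ) 1,
      δidle / (L * p) + (1 / (L * p * (1 - p) ^ (L - 1)) - 1 / (L * p) - 1) * δcoll + δsucc
        = δidle / L * p⁻¹ + δcoll / L * ∑ k ∈ range (L - 1), (1 - p)⁻¹ ^ (k + 1)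
          + (δsucc - δcoll) := by
    intro p hp
    rw [sum_range_inv_one_sub_pow_succ hp.1.ne' hp.2.ne]
    field_simp
    ring
  have ha := div_pos hidle hL₀
  have hb := div_pos hcoll hL₀
  obtain ⟨popt, hpopt, hmin, huniq⟩ :=
    (strictConvexOn_inv_add_sum (δsucc - δcoll) (L - 1) ha hb.le).existsUnique_isMinOn_Ioo
      one_pos (tendsto_inv_add_sum_nhdsGT_zero _ _ ha hb.le)
      (tendsto_inv_add_sum_nhdsLT_one _ _ ha.le hb (by omega))
  refine ⟨popt, hpopt, fun q hq => ?_, fun p' hp' hmin' => huniq p' hp' fun q hq => ?_⟩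
  · rw [hf popt hpopt, hf q hq]
    exact hmin hq
  · have := hmin' q hq
    rwa [hf p' hp', hf q hq] at this

/-- For `L ≥ 2` and positive constants, `f_L` attains a minimum on `(0,1)`, and the
minimizer `p_opt ∈ (0,1)` is unique. -/
theorem fL_exists_unique_minimizer (L : ℕ) (hL : 2 ≤ L)
    (δidle δcoll δsucc : ℝ) (hidle : 0 < δidle) (hcoll : 0 < δcoll) (hsucc : 0 < δsucc) :
    ∃ popt ∈ Set.Ioo (0 : ℝ) 1,
      (∀ q ∈ Set.Ioo (0 : ℝ) 1,
          δidle / (L * popt)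
            + (1 / (L * popt * (1 - popt) ^ (L - 1)) - 1 / (L * popt) - 1) * δcoll + δsucc
          ≤ δidle / (L * q)
            + (1 / (L * q * (1 - q) ^ (L - 1)) - 1 / (L * q) - 1) * δcoll + δsucc) ∧
      ∀ p' ∈ Set.Ioo (0 : ℝ) 1,
        (∀ q ∈ Set.Ioo (0 : ℝ) 1,
            δidle / (L * p')
              + (1 / (L * p' * (1 - p') ^ (L - 1)) - 1 / (L * p') - 1) * δcoll + δsucc
            ≤ δidle / (L * q)
              + (1 / (L * q * (1 - q) ^ (L - 1)) - 1 / (L * q) - 1) * δcoll + δsucc) →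
        p' = popt :=
  fL_exists_unique_minimizer_general L hL δidle δcoll δsucc hidle hcoll
end
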